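/- arXiv:2105.11417 — 2 statements merged into one kernel-verified Lean document; each statement's English description precedes it below -/
import Mathlib

section
/- Let n, p, q be natural numbers, m a positive natural number, and let L ∈ ℂ^{m×m×(2p+1)×(2q+1)} be a complex 2D convolution filter. Let J(L) denote the Jacobian of the convolution with filter L on m-channel n×n inputs (defined explicitly in the context), and let conv_transpose(L) be the filter with [conv_transpose(L)]_{a,b,k,l} = conj(L_{b,a,2p-k,2q-l}). Then J(conv_transpose(L)) = (J(L))^H, the conjugate transpose of J(L). -/
open Matrix

open scoped Kronecker ComplexConjugate

/-- The shift matrix `P^(k)`: the `n × n` matrix with `P^(k)_{i,j} = 1` if `i - j = k`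
(as integers) and `0` otherwise. -/
noncomputable def shiftP (n : ℕ) (k : ℤ) : Matrix (Fin n) (Fin n) ℂ :=
  Matrix.of fun i j => if ((i : ℕ) : ℤ) - ((j : ℕ) : ℤ) = k then 1 else 0

/-- The Jacobian of the 2D convolution (zero padding, stride 1) with a complex filter
`L ∈ ℂ^{m×m×(2p+1)×(2q+1)}` on `m`-channel `n×n` inputs: the block matrix whose `(a,b)` block is
`Σ_{i=-p}^{p} Σ_{j=-q}^{q} L_{a,b,p+i,q+j} • (P^(i) ⊗ P^(j))`. -/
noncomputable def convJacobian (n p q m : ℕ)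
    (L : Fin m → Fin m → Fin (2 * p + 1) → Fin (2 * q + 1) → ℂ) :
    Matrix (Fin m × Fin n × Fin n) (Fin m × Fin n × Fin n) ℂ :=
  Matrix.of fun x y =>
    ∑ k : Fin (2 * p + 1), ∑ l : Fin (2 * q + 1),
      L x.1 y.1 k l *
        (shiftP n (((k : ℕ) : ℤ) - (p : ℤ)) ⊗ₖ shiftP n (((l : ℕ) : ℤ) - (q : ℤ))) x.2 y.2

/-! Since `(P^(k))ᴴ = P^(-k)` and `(A ⊗ B)ᴴ = Aᴴ ⊗ Bᴴ`, the `(y, x)` entry of `J(L)ᴴ` is a sum of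
`conj L_{b,a,k,l}` against `P^(p-k) ⊗ P^(q-l)`; reindexing by `k ↦ 2p - k`, `l ↦ 2q - l` turns it into
the `(x, y)` entry of `J(conv_transpose L)`. -/

theorem conjTranspose_shiftP (n : ℕ) (k : ℤ) : (shiftP n k)ᴴ = shiftP n (-k) := by
  ext i j
  simp only [shiftP, conjTranspose_apply, of_apply, apply_ite star, star_one, star_zero]
  congr 1
  exact propext (by omega)

theorem Fin.val_rev_sub_eq_neg (p : ℕ) (k : Fin (2 * p + 1)) :
    ((k.rev : ℕ) : ℤ) - p = -(((k : ℕ) : ℤ) - p) := by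
  have := k.isLt
  rw [Fin.val_rev]
  omega

theorem conjTranspose_shiftP_rev_sub (n p : ℕ) (k : Fin (2 * p + 1)) :
    (shiftP n (((k.rev : ℕ) : ℤ) - p))ᴴ = shiftP n (((k : ℕ) : ℤ) - p) := by
  rw [conjTranspose_shiftP, Fin.val_rev_sub_eq_neg, neg_neg]

theorem convJacobian_conv_transpose_general (n p q m : ℕ)
    (L : Fin m → Fin m → Fin (2 * p + 1) → Fin (2 * q + 1) → ℂ) :
    convJacobian n p q m (fun a b k l => conj (L b a k.rev l.rev)) =
      (convJacobian n p q m L)ᴴ := by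
  ext ⟨a, x⟩ ⟨b, y⟩
  simp only [convJacobian, conjTranspose_apply, of_apply, star_sum, star_mul']
  refine Fintype.sum_equiv Fin.revPerm _ _ fun k => Fintype.sum_equiv Fin.revPerm _ _ fun l => ?_
  rw [Fin.revPerm_apply, Fin.revPerm_apply, ← conjTranspose_apply, conjTranspose_kronecker,
    conjTranspose_shiftP_rev_sub, conjTranspose_shiftP_rev_sub]
  rfl

/-- For a complex filter `L`, the Jacobian of the convolution with
`conv_transpose(L)_{a,b,k,l} = conj (L_{b,a,2p-k,2q-l})` equals the conjugate transpose of the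
Jacobian of the convolution with `L`. -/
theorem convJacobian_conv_transpose (n p q m : ℕ) (hm : 0 < m)
    (L : Fin m → Fin m → Fin (2 * p + 1) → Fin (2 * q + 1) → ℂ) :
    convJacobian n p q m (fun a b k l => conj (L b a k.rev l.rev)) =
      (convJacobian n p q m L)ᴴ :=
  convJacobian_conv_transpose_general n p q m L
end

section
/- Let n, p, q be natural numbers, m a positive natural number, and let L ∈ ℂ^{m×m×(2p+1)×(2q+1)} be a complex 2D convolution filter, with Jacobian J(L) on m-channel n×n inputs (defined explicitly in the context). Assume n ≥ 2p+1 and n ≥ 2q+1. Then J(L) is skew-Hermitian (J(L)^H = -J(L)) if and only if there exists a filter M ∈ ℂ^{m×m×(2p+1)×(2q+1)} such that L = M - conv_transpose(M), where [conv_transpose(M)]_{a,b,k,l} = conj(M_{b,a,2p-k,2q-l}). -/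
open Matrix

open scoped Kronecker ComplexConjugate

/-!
Since `(P^(k))ᵀ = P^(-k)`, conjugate-transposing `J(L)` swaps the channels, reflects the taps and
conjugates them: `J(L)ᴴ = J(conv_transpose L)`. When `n ≥ 2p+1` and `n ≥ 2q+1` every tap of `L`
appears as an entry of `J(L)`, so `L ↦ J(L)` is injective and `J(L)` is skew-Hermitian iff
`conv_transpose L = -L`. As `conv_transpose` is a conjugate-linear involution, this holds iff
`L = M - conv_transpose M` for some `M` (take `M = L / 2`).
-/
/-- `[conv_transpose M]_{a,b,k,l} = conj M_{b,a,r-1-k,s-1-l}`. -/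
def convTranspose {m r s : ℕ} (M : Fin m → Fin m → Fin r → Fin s → ℂ) :
    Fin m → Fin m → Fin r → Fin s → ℂ :=
  fun a b k l => conj (M b a k.rev l.rev)

section convTranspose

variable {m r s : ℕ}

@[simp]
lemma convTranspose_convTranspose (M : Fin m → Fin m → Fin r → Fin s → ℂ) :
    convTranspose (convTranspose M) = M := by
  funext a b k l
  simp [convTranspose]

lemma convTranspose_sub (M N : Fin m → Fin m → Fin r → Fin s → ℂ) :
    convTranspose (M - N) = convTranspose M - convTranspose N := by
  funext a b k l
  simp [convTranspose]

lemma convTranspose_smul (c : ℂ) (M : Fin m → Fin m → Fin r → Fin s → ℂ) :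
    convTranspose (c • M) = conj c • convTranspose M := by
  funext a b k l
  simp [convTranspose]

lemma exists_eq_sub_convTranspose_iff (L : Fin m → Fin m → Fin r → Fin s → ℂ) :
    (∃ M, L = M - convTranspose M) ↔ convTranspose L = -L := by
  constructor
  · rintro ⟨M, rfl⟩
    rw [convTranspose_sub, convTranspose_convTranspose, neg_sub]
  · intro hL
    refine ⟨(2 : ℂ)⁻¹ • L, ?_⟩
    have hconj : conj (2 : ℂ)⁻¹ = 2⁻¹ := by simp [map_ofNat]
    rw [convTranspose_smul, hconj, hL, smul_neg, sub_neg_eq_add, ← add_smul]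
    norm_num

end convTranspose

section convJacobian

variable {n p q m : ℕ}

lemma convJacobian_apply_of_sub_eq (L : Fin m → Fin m → Fin (2 * p + 1) → Fin (2 * q + 1) → ℂ)
    (a b : Fin m) (k : Fin (2 * p + 1)) (l : Fin (2 * q + 1)) (i₁ i₂ j₁ j₂ : Fin n)
    (h₁ : ((i₁ : ℕ) : ℤ) - ((j₁ : ℕ) : ℤ) = ((k : ℕ) : ℤ) - p)
    (h₂ : ((i₂ : ℕ) : ℤ) - ((j₂ : ℕ) : ℤ) = ((l : ℕ) : ℤ) - q) :
    convJacobian n p q m L (a, i₁, i₂) (b, j₁, j₂) = L a b k l := by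
  simp only [convJacobian, shiftP, of_apply, kroneckerMap_apply, h₁, h₂, sub_left_inj,
    Int.natCast_inj, Fin.val_inj, mul_ite, mul_one, mul_zero]
  simp

lemma convJacobian_neg (L : Fin m → Fin m → Fin (2 * p + 1) → Fin (2 * q + 1) → ℂ) :
    convJacobian n p q m (-L) = -convJacobian n p q m L := by
  ext x y
  simp [convJacobian, neg_mul, Finset.sum_neg_distrib]

lemma convJacobian_conjTranspose
    (L : Fin m → Fin m → Fin (2 * p + 1) → Fin (2 * q + 1) → ℂ) :
    (convJacobian n p q m L)ᴴ = convJacobian n p q m (convTranspose L) := by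
  ext ⟨a, i₁, i₂⟩ ⟨b, j₁, j₂⟩
  simp only [conjTranspose_apply, convJacobian, of_apply, shiftP, kroneckerMap_apply, star_sum]
  refine Fintype.sum_equiv Fin.revPerm _ _ fun k => ?_
  refine Fintype.sum_equiv Fin.revPerm _ _ fun l => ?_
  have hk : ((j₁ : ℕ) : ℤ) - (i₁ : ℕ) = (k : ℕ) - p ↔
      ((i₁ : ℕ) : ℤ) - (j₁ : ℕ) = ((k.rev : ℕ) : ℤ) - p := by
    rw [Fin.val_rev]; omega
  have hl : ((j₂ : ℕ) : ℤ) - (i₂ : ℕ) = (l : ℕ) - q ↔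
      ((i₂ : ℕ) : ℤ) - (j₂ : ℕ) = ((l.rev : ℕ) : ℤ) - q := by
    rw [Fin.val_rev]; omega
  simp only [Fin.revPerm_apply, convTranspose, if_congr hk rfl rfl, if_congr hl rfl rfl,
    star_mul', apply_ite (star : ℂ → ℂ), star_one, star_zero, starRingEnd_apply, Fin.rev_rev]

lemma convJacobian_injective (hp : 2 * p + 1 ≤ n) (hq : 2 * q + 1 ≤ n) :
    Function.Injective (convJacobian n p q m) := by
  intro L L' h
  funext a b k l
  have hk : (k : ℕ) < n := k.isLt.trans_le hp
  have hl : (l : ℕ) < n := l.isLt.trans_le hq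
  have hpn : p < n := by omega
  have hqn : q < n := by omega
  have hentry := congrFun (congrFun h (a, ⟨k, hk⟩, ⟨l, hl⟩)) (b, ⟨p, hpn⟩, ⟨q, hqn⟩)
  rwa [convJacobian_apply_of_sub_eq L a b k l _ _ _ _ rfl rfl,
    convJacobian_apply_of_sub_eq L' a b k l _ _ _ _ rfl rfl] at hentry

end convJacobian

theorem convJacobian_skewHermitian_iff_general (n p q m : ℕ)
    (hp : 2 * p + 1 ≤ n) (hq : 2 * q + 1 ≤ n)
    (L : Fin m → Fin m → Fin (2 * p + 1) → Fin (2 * q + 1) → ℂ) :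
    (convJacobian n p q m L)ᴴ = -(convJacobian n p q m L) ↔
      ∃ M : Fin m → Fin m → Fin (2 * p + 1) → Fin (2 * q + 1) → ℂ,
        L = fun a b k l => M a b k l - conj (M b a k.rev l.rev) := by
  rw [convJacobian_conjTranspose, ← convJacobian_neg, (convJacobian_injective hp hq).eq_iff]
  exact (exists_eq_sub_convTranspose_iff L).symm

/-- If `n ≥ 2p+1` and `n ≥ 2q+1`, the Jacobian of the convolution with a complex filter `L` is
skew-Hermitian if and only if `L = M - conv_transpose(M)` for some filter `M`, where
`conv_transpose(M)_{a,b,k,l} = conj (M_{b,a,2p-k,2q-l})`. -/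
theorem convJacobian_skewHermitian_iff (n p q m : ℕ) (hm : 0 < m)
    (hp : 2 * p + 1 ≤ n) (hq : 2 * q + 1 ≤ n)
    (L : Fin m → Fin m → Fin (2 * p + 1) → Fin (2 * q + 1) → ℂ) :
    (convJacobian n p q m L)ᴴ = -(convJacobian n p q m L) ↔
      ∃ M : Fin m → Fin m → Fin (2 * p + 1) → Fin (2 * q + 1) → ℂ,
        L = fun a b k l => M a b k l - conj (M b a k.rev l.rev) :=
  convJacobian_skewHermitian_iff_general n p q m hp hq L
end
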